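/- Let r and n be integers with 1 ≤ r ≤ n and r dividing n. If F_1, F_2, F_3 are graphs on a common vertex set of size n, each of which is the vertex-disjoint union of n/r copies of the complete graph K_r, then the simultaneous domination number of F_1, F_2, F_3 is at most ((2r−1)/r^2) · n. -/

import Mathlib

/-- The simultaneous domination number of factors `F 0, …, F (k-1)` on a common
finite vertex set: the minimum cardinality of a set `S` that is a dominating set
in every factor. -/
noncomputable def simDomNum {V : Type*} [Fintype V] {k : ℕ}
    (F : Fin k → SimpleGraph V) : ℕ :=
  sInf {m | ∃ S : Finset V, (∀ i, ∀ v ∉ S, ∃ u ∈ S, (F i).Adj v u) ∧ S.card = m}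

/-- `G` is the vertex-disjoint union of copies of `K_r`: the vertex set is
partitioned into blocks of size `r`, and two vertices are adjacent iff they are
distinct and lie in a common block. -/
def IsUnionCliques {V : Type*} [Fintype V] [DecidableEq V]
    (G : SimpleGraph V) (r : ℕ) : Prop :=
  ∃ P : Finpartition (Finset.univ : Finset V),
    (∀ b ∈ P.parts, b.card = r) ∧
    ∀ u v : V, G.Adj u v ↔ (u ≠ v ∧ ∃ b ∈ P.parts, u ∈ b ∧ v ∈ b)

/-!
Let `P₁, P₂, P₃` be the partitions into `m = n / r` cliques. Pick a transversal `T` of `P₁`,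
one vertex from each block, uniformly at random; it dominates `F₁`. A block `B` of `P₂` or `P₃`
is missed by `T` with probability `∏_b (1 - |b ∩ B| / r) ≤ (1 - 1/r)^|B| = (1 - 1/r)^r`, by
Bernoulli's inequality applied blockwise. Adding one vertex of every missed block gives an
SD-set of expected size at most `m + 2m(1 - 1/r)^r ≤ m + m(1 - 1/r) = (2r - 1) n / r²`, the
last step being `(1 + 1/(r-1))^(r-1) ≥ 2`.
-/

open Finset

theorem sub_le_mul_one_sub_inv_pow {r : ℝ} (hr : 1 ≤ r) (c : ℕ) :
    r - c ≤ r * (1 - r⁻¹) ^ c := by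
  have hr0 : 0 < r := by linarith
  have hbern := one_add_mul_le_pow (a := -r⁻¹) (by linarith [inv_le_one_of_one_le₀ hr]) c
  calc r - c = r * (1 + c * -r⁻¹) := by field_simp; ring
    _ ≤ r * (1 + -r⁻¹) ^ c := by gcongr
    _ = r * (1 - r⁻¹) ^ c := by ring

theorem two_mul_one_sub_inv_pow_le {r : ℕ} (hr : 1 ≤ r) :
    2 * (1 - (r : ℝ)⁻¹) ^ r ≤ 1 - (r : ℝ)⁻¹ := by
  obtain ⟨k, rfl⟩ := Nat.exists_eq_add_of_le' hr
  rcases k.eq_zero_or_pos with rfl | hk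
  · norm_num
  have hk' : (0 : ℝ) < k := by exact_mod_cast hk
  set x : ℝ := 1 + (k : ℝ)⁻¹
  have hx : 2 ≤ x ^ k := by
    have := one_add_mul_le_pow (a := (k : ℝ)⁻¹) (by linarith [inv_pos.mpr hk']) k
    rwa [mul_inv_cancel₀ hk'.ne', one_add_one_eq_two] at this
  have hq : 1 - ((k + 1 : ℕ) : ℝ)⁻¹ = x⁻¹ := by
    simp only [x]
    push_cast
    field_simp
    ring
  rw [hq]
  calc 2 * x⁻¹ ^ (k + 1) = 2 / x ^ k * x⁻¹ := by rw [pow_succ, inv_pow]; ring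
    _ ≤ 1 * x⁻¹ := by gcongr; rw [div_le_one (by positivity)]; exact hx
    _ = x⁻¹ := one_mul _

theorem Finset.exists_superset_forall_not_disjoint {α : Type*} [DecidableEq α]
    (𝒜 : Finset (Finset α)) (h𝒜 : ∀ b ∈ 𝒜, b.Nonempty) (A : Finset α) :
    ∃ S, A ⊆ S ∧ (∀ b ∈ 𝒜, ¬Disjoint b S) ∧ #S ≤ #A + #{b ∈ 𝒜 | Disjoint b A} := by
  choose pick hpick using h𝒜
  set missed := {b ∈ 𝒜 | Disjoint b A}
  refine ⟨A ∪ missed.attach.image fun b => pick b.1 (mem_filter.mp b.2).1,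
    subset_union_left, fun b hb hdisj => ?_, ?_⟩
  · by_cases hbA : Disjoint b A
    · refine disjoint_left.mp hdisj (hpick b hb) (mem_union_right _ (mem_image.mpr ?_))
      exact ⟨⟨b, mem_filter.mpr ⟨hb, hbA⟩⟩, mem_attach _ _, rfl⟩
    · exact hbA (hdisj.mono_right subset_union_left)
  · calc #(A ∪ _) ≤ #A + #(missed.attach.image _) := card_union_le _ _
      _ ≤ #A + #missed := by grw [card_image_le, card_attach]

namespace Finpartition

variable {α : Type*} [DecidableEq α] {s : Finset α} (P : Finpartition s) {r : ℕ}

theorem card_eq_card_parts_mul (hP : ∀ b ∈ P.parts, #b = r) : #s = #P.parts * r := by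
  rw [← P.sum_card_parts, sum_congr rfl hP, sum_const, smul_eq_mul]

theorem card_parts_eq_of_forall_card_eq (hr : 1 ≤ r) (hP : ∀ b ∈ P.parts, #b = r)
    (Q : Finpartition s) (hQ : ∀ b ∈ Q.parts, #b = r) : #Q.parts = #P.parts :=
  Nat.eq_of_mul_eq_mul_right hr <| by
    rw [← Q.card_eq_card_parts_mul hQ, ← P.card_eq_card_parts_mul hP]

theorem sum_card_inter {B : Finset α} (hB : B ⊆ s) : ∑ b ∈ P.parts, #(b ∩ B) = #B := by
  rw [← (P.restrict hB).sum_card_parts, P.sum_restrict hB card card_empty]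
  rfl

def transversals : Finset (∀ b ∈ P.parts, α) := P.parts.pi fun b => b

def transversalSet (f : ∀ b ∈ P.parts, α) : Finset α := P.parts.attach.image fun b => f b.1 b.2

theorem transversals_nonempty : P.transversals.Nonempty :=
  pi_nonempty.mpr fun _ => P.nonempty_of_mem_parts

theorem card_transversals (hP : ∀ b ∈ P.parts, #b = r) : #P.transversals = r ^ #P.parts := by
  rw [transversals, card_pi, prod_congr rfl hP, prod_const]

theorem card_transversalSet_le (f : ∀ b ∈ P.parts, α) : #(P.transversalSet f) ≤ #P.parts :=
  card_image_le.trans_eq card_attach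

theorem not_disjoint_transversalSet {f : ∀ b ∈ P.parts, α} (hf : f ∈ P.transversals)
    {b : Finset α} (hb : b ∈ P.parts) : ¬Disjoint b (P.transversalSet f) :=
  not_disjoint_iff.mpr
    ⟨f b hb, mem_pi.mp hf b hb, mem_image.mpr ⟨⟨b, hb⟩, mem_attach _ _, rfl⟩⟩

theorem filter_transversals_disjoint (B : Finset α) :
    {f ∈ P.transversals | Disjoint B (P.transversalSet f)} = P.parts.pi fun b => b \ B := by
  ext f
  rw [Finset.mem_filter]
  simp only [transversals, transversalSet, mem_pi, disjoint_right, mem_image,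
    mem_attach, true_and, Subtype.exists, mem_sdiff, forall_exists_index, forall_and]
  exact and_congr_right fun _ => ⟨fun h b hb => h b hb rfl, fun h _ b hb hfb => hfb ▸ h b hb⟩

theorem card_filter_transversals_disjoint_le (hr : 1 ≤ r) (hP : ∀ b ∈ P.parts, #b = r)
    {B : Finset α} (hB : B ⊆ s) :
    (#{f ∈ P.transversals | Disjoint B (P.transversalSet f)} : ℝ) ≤
      r ^ #P.parts * (1 - (r : ℝ)⁻¹) ^ #B := by
  have hr' : (1 : ℝ) ≤ r := by exact_mod_cast hr
  rw [filter_transversals_disjoint, card_pi]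
  push_cast
  calc ∏ b ∈ P.parts, (#(b \ B) : ℝ) ≤ ∏ b ∈ P.parts, (r * (1 - (r : ℝ)⁻¹) ^ #(b ∩ B)) := by
        refine prod_le_prod (fun _ _ => by positivity) fun b hb => ?_
        have hsplit : (#(b \ B) + #(b ∩ B) : ℝ) = r := by
          exact_mod_cast (card_sdiff_add_card_inter b B).trans (hP b hb)
        linarith [sub_le_mul_one_sub_inv_pow hr' #(b ∩ B)]
    _ = r ^ #P.parts * (1 - (r : ℝ)⁻¹) ^ #B := by
        rw [prod_mul_distrib, prod_const, prod_pow_eq_pow_sum, P.sum_card_inter hB]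

theorem sum_card_filter_disjoint_transversalSet_le (hr : 1 ≤ r) (hP : ∀ b ∈ P.parts, #b = r)
    (Q : Finpartition s) (hQ : ∀ b ∈ Q.parts, #b = r) :
    ∑ f ∈ P.transversals, (#{B ∈ Q.parts | Disjoint B (P.transversalSet f)} : ℝ) ≤
      #P.parts * (r ^ #P.parts * (1 - (r : ℝ)⁻¹) ^ r) := by
  have hswap := sum_card_bipartiteAbove_eq_sum_card_bipartiteBelow
    (s := P.transversals) (t := Q.parts) (r := fun f B => Disjoint B (P.transversalSet f))
  calc ∑ f ∈ P.transversals, (#{B ∈ Q.parts | Disjoint B (P.transversalSet f)} : ℝ)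
      = ∑ B ∈ Q.parts, (#{f ∈ P.transversals | Disjoint B (P.transversalSet f)} : ℝ) := by
        exact_mod_cast hswap
    _ ≤ ∑ B ∈ Q.parts, (r ^ #P.parts * (1 - (r : ℝ)⁻¹) ^ r : ℝ) := by
        refine sum_le_sum fun B hB => ?_
        exact (P.card_filter_transversals_disjoint_le hr hP (Q.le hB)).trans_eq (by rw [hQ B hB])
    _ = #P.parts * (r ^ #P.parts * (1 - (r : ℝ)⁻¹) ^ r) := by
        rw [sum_const, nsmul_eq_mul, Q.card_parts_eq_of_forall_card_eq hr hQ P hP]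

theorem exists_mem_transversals_card_filter_disjoint_le (hr : 1 ≤ r)
    (hP : ∀ b ∈ P.parts, #b = r) (Q₁ Q₂ : Finpartition s) (hQ₁ : ∀ b ∈ Q₁.parts, #b = r)
    (hQ₂ : ∀ b ∈ Q₂.parts, #b = r) :
    ∃ f ∈ P.transversals, (#{B ∈ Q₁.parts ∪ Q₂.parts | Disjoint B (P.transversalSet f)} : ℝ) ≤
      (1 - (r : ℝ)⁻¹) * #P.parts := by
  apply exists_le_of_sum_le P.transversals_nonempty
  rw [sum_const, P.card_transversals hP, nsmul_eq_mul]
  set m : ℝ := (#P.parts : ℝ)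
  set q : ℝ := 1 - (r : ℝ)⁻¹
  have hmissed : ∀ f ∈ P.transversals,
      (#{B ∈ Q₁.parts ∪ Q₂.parts | Disjoint B (P.transversalSet f)} : ℝ) ≤
        #{B ∈ Q₁.parts | Disjoint B (P.transversalSet f)} +
          #{B ∈ Q₂.parts | Disjoint B (P.transversalSet f)} := fun f _ => by
    rw [filter_union]
    exact_mod_cast card_union_le _ _
  calc ∑ f ∈ P.transversals, (#{B ∈ Q₁.parts ∪ Q₂.parts | Disjoint B (P.transversalSet f)} : ℝ)
      ≤ m * (r ^ #P.parts * q ^ r) + m * (r ^ #P.parts * q ^ r) := by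
        grw [sum_le_sum hmissed, sum_add_distrib,
          P.sum_card_filter_disjoint_transversalSet_le hr hP Q₁ hQ₁,
          P.sum_card_filter_disjoint_transversalSet_le hr hP Q₂ hQ₂]
    _ = m * r ^ #P.parts * (2 * q ^ r) := by ring
    _ ≤ m * r ^ #P.parts * q := by gcongr; exact two_mul_one_sub_inv_pow_le hr
    _ = (r ^ #P.parts : ℕ) * (q * m) := by push_cast; ring

end Finpartition

section Domination

variable {V : Type*}

def IsDominatingSet (G : SimpleGraph V) (S : Finset V) : Prop :=
  ∀ v ∉ S, ∃ u ∈ S, G.Adj v u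

theorem simDomNum_le_card [Fintype V] {k : ℕ} {F : Fin k → SimpleGraph V} {S : Finset V}
    (hS : ∀ i, IsDominatingSet (F i) S) : simDomNum F ≤ #S :=
  Nat.sInf_le ⟨S, hS, rfl⟩

theorem isDominatingSet_of_forall_not_disjoint [Fintype V] [DecidableEq V] {G : SimpleGraph V}
    {P : Finpartition (univ : Finset V)}
    (hG : ∀ u v : V, G.Adj u v ↔ (u ≠ v ∧ ∃ b ∈ P.parts, u ∈ b ∧ v ∈ b)) {S : Finset V}
    (hS : ∀ b ∈ P.parts, ¬Disjoint b S) : IsDominatingSet G S := by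
  intro v hv
  obtain ⟨b, hb, hvb⟩ := P.exists_mem (mem_univ v)
  obtain ⟨u, hub, huS⟩ := not_disjoint_iff.mp (hS b hb)
  exact ⟨u, huS, (hG v u).mpr ⟨fun h => hv (h ▸ huS), b, hb, hvb, hub⟩⟩

end Domination

theorem stmt11_general {V : Type*} [Fintype V] [DecidableEq V] {r n : ℕ}
    (hr : 1 ≤ r) (hn : Fintype.card V = n)
    (F₁ F₂ F₃ : SimpleGraph V)
    (h1 : IsUnionCliques F₁ r) (h2 : IsUnionCliques F₂ r)
    (h3 : IsUnionCliques F₃ r) :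
    (simDomNum ![F₁, F₂, F₃] : ℝ) ≤ ((2 * (r : ℝ) - 1) / (r : ℝ) ^ 2) * n := by
  obtain ⟨P₁, hP₁, hF₁⟩ := h1
  obtain ⟨P₂, hP₂, hF₂⟩ := h2
  obtain ⟨P₃, hP₃, hF₃⟩ := h3
  obtain ⟨f, hf, hmissed⟩ :=
    P₁.exists_mem_transversals_card_filter_disjoint_le hr hP₁ P₂ P₃ hP₂ hP₃
  obtain ⟨S, hfS, hSmeets, hScard⟩ := (P₂.parts ∪ P₃.parts).exists_superset_forall_not_disjoint
    (fun b hb => (mem_union.mp hb).elim P₂.nonempty_of_mem_parts P₃.nonempty_of_mem_parts)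
    (P₁.transversalSet f)
  have hdom : ∀ i, IsDominatingSet (![F₁, F₂, F₃] i) S := by
    intro i
    fin_cases i
    · exact isDominatingSet_of_forall_not_disjoint hF₁ fun b hb hdisj =>
        P₁.not_disjoint_transversalSet hf hb (hdisj.mono_right hfS)
    · exact isDominatingSet_of_forall_not_disjoint hF₂ fun b hb => hSmeets b (mem_union_left _ hb)
    · exact isDominatingSet_of_forall_not_disjoint hF₃ fun b hb => hSmeets b (mem_union_right _ hb)
  have hnm : (n : ℝ) = #P₁.parts * r := by
    rw [← hn, ← card_univ, P₁.card_eq_card_parts_mul hP₁, Nat.cast_mul]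
  calc (simDomNum ![F₁, F₂, F₃] : ℝ) ≤ #S := by exact_mod_cast simDomNum_le_card hdom
    _ ≤ #P₁.parts + (1 - (r : ℝ)⁻¹) * #P₁.parts := by
        have hcard : (#S : ℝ) ≤ #(P₁.transversalSet f) +
            #{b ∈ P₂.parts ∪ P₃.parts | Disjoint b (P₁.transversalSet f)} := by
          exact_mod_cast hScard
        linarith [(Nat.cast_le (α := ℝ)).mpr (P₁.card_transversalSet_le f)]
    _ = ((2 * (r : ℝ) - 1) / (r : ℝ) ^ 2) * n := by
        rw [hnm]
        field_simp
        ring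

theorem stmt11 {V : Type*} [Fintype V] [DecidableEq V] {r n : ℕ}
    (hr : 1 ≤ r) (hrn : r ≤ n) (hdvd : r ∣ n) (hn : Fintype.card V = n)
    (F₁ F₂ F₃ : SimpleGraph V)
    (h1 : IsUnionCliques F₁ r) (h2 : IsUnionCliques F₂ r)
    (h3 : IsUnionCliques F₃ r) :
    (simDomNum ![F₁, F₂, F₃] : ℝ) ≤ ((2 * (r : ℝ) - 1) / (r : ℝ) ^ 2) * n :=
  stmt11_general hr hn F₁ F₂ F₃ h1 h2 h3
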